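/- arXiv:1512.05524 — 3 statements merged into one kernel-verified Lean document; each statement's English description precedes it below -/
import Mathlib

section
/- For a half-space Π = {z ∈ ℂⁿ : Re⟨z - p, ν⟩ < 0} (with ν ≠ 0), any point z ∈ Π, and any vector X ∈ ℂⁿ, the Carathéodory metric of Π equals 1/(2 d_Π(z;X)): γ_Π(z;X) = 1/(2 d_Π(z;X)), with the convention that the right-hand side is 0 when d_Π(z;X) = ∞. -/
open Set Metric
open scoped ENNReal

/-- Carathéodory metric of `D` at `z` in direction `X`, valued in `[0,∞]`. -/
noncomputable def carath {E : Type*} [NormedAddCommGroup E] [NormedSpace ℂ E]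
    (D : Set E) (z X : E) : ℝ≥0∞ :=
  ⨆ f ∈ {f : E → ℂ | DifferentiableOn ℂ f D ∧ MapsTo f D (ball (0:ℂ) 1)},
    ENNReal.ofReal ‖fderiv ℂ f z X‖

/-- Kobayashi metric of `D` at `z` in direction `X`, valued in `[0,∞]` (`inf ∅ = ∞`). -/
noncomputable def kob {E : Type*} [NormedAddCommGroup E] [NormedSpace ℂ E]
    (D : Set E) (z X : E) : ℝ≥0∞ :=
  sInf {c : ℝ≥0∞ | ∃ α : ℂ, c = ENNReal.ofReal ‖α‖ ∧
    ∃ φ : ℂ → E, DifferentiableOn ℂ φ (ball (0:ℂ) 1) ∧ MapsTo φ (ball (0:ℂ) 1) D ∧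
      φ 0 = z ∧ α • (fderiv ℂ φ 0 1) = X}

/-- Distance from `z` to `∂D` in the direction `X`, valued in `(0,∞]` (for `z ∈ D` open). -/
noncomputable def dirDist {E : Type*} [NormedAddCommGroup E] [NormedSpace ℂ E]
    (D : Set E) (z X : E) : ℝ≥0∞ :=
  sSup {c : ℝ≥0∞ | ∃ r : ℝ, 0 < r ∧ c = ENNReal.ofReal r ∧
    ∀ lam : ℂ, ‖lam‖ < r → z + lam • X ∈ D}

/-
Everything happens on the complex line `t ↦ z + t X`, where the half-space becomes the half-plane
`Re (a + t b) < 0`, with `a`, `b` the values at `z - p` and `X` of the linear form `ℓ` defining `Π`;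
its largest disc about `0` has radius `-Re a / |b|`. Composing `f` with a Cayley transform of the
unit disc onto this half-plane and applying Cauchy's estimate bounds `|f'(z) X|` by
`|b| / (-2 Re a)` (by Liouville it is `0` when `b = 0`), and the Möbius map
`w ↦ (ℓ w - a) / (ℓ w + ā)` of `Π` onto the disc attains the bound.
-/

open Complex ComplexConjugate Filter Topology

section OneVariable

variable {F : Type*} [NormedAddCommGroup F] [NormedSpace ℂ F]

theorem norm_deriv_le_of_forall_mem_ball_norm_le {f : ℂ → F} {c : ℂ} {R C : ℝ} (hR : 0 < R)
    (hd : DifferentiableOn ℂ f (ball c R)) (hC : ∀ w ∈ ball c R, ‖f w‖ ≤ C) :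
    ‖deriv f c‖ ≤ C / R := by
  have hsmall : ∀ r ∈ Ioo 0 R, ‖deriv f c‖ * r ≤ C := fun r ⟨hr0, hrR⟩ => by
    have hr := norm_deriv_le_of_forall_mem_sphere_norm_le hr0
      (hd.diffContOnCl_ball (closedBall_subset_ball hrR))
      fun w hw => hC w (closedBall_subset_ball hrR (sphere_subset_closedBall hw))
    rwa [le_div_iff₀ hr0] at hr
  rw [le_div_iff₀ hR]
  exact le_of_tendsto (((continuous_const_mul _).tendsto R).mono_left nhdsWithin_le_nhds)
    (eventually_of_mem (Ioo_mem_nhdsLT hR) hsmall)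

theorem Complex.one_add_ne_zero_of_norm_lt_one {w : ℂ} (hw : ‖w‖ < 1) : 1 + w ≠ 0 := fun h => by
  rw [← add_eq_zero_iff_neg_eq.1 h] at hw
  simp at hw

theorem Complex.re_one_sub_div_one_add_pos {w : ℂ} (hw : ‖w‖ < 1) :
    0 < ((1 - w) / (1 + w)).re := by
  have hw' : normSq w < 1 := by rw [normSq_eq_norm_sq]; nlinarith [norm_nonneg w]
  rw [div_re, ← add_div]
  refine div_pos ?_ (normSq_pos.2 (one_add_ne_zero_of_norm_lt_one hw))
  simp only [sub_re, add_re, sub_im, add_im, one_re, one_im, normSq_apply] at hw' ⊢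
  nlinarith

theorem norm_deriv_le_of_mapsTo_leftHalfPlane {h : ℂ → F} {a : ℂ} (ha : a.re < 0)
    (hd : DifferentiableOn ℂ h {u | u.re < 0}) (hm : MapsTo h {u | u.re < 0} (ball 0 1)) :
    ‖deriv h a‖ ≤ (2 * -a.re)⁻¹ := by
  -- `ψ` is a Cayley transform of the unit disc onto the left half-plane with `ψ 0 = a`
  set ψ : ℂ → ℂ := fun w => a.re * ((1 - w) / (1 + w)) + a.im * I
  have hψ0 : ψ 0 = a := by simp [ψ, re_add_im]
  have hψm : MapsTo ψ (ball 0 1) {u | u.re < 0} := fun w hw => by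
    have := re_one_sub_div_one_add_pos (mem_ball_zero_iff.1 hw)
    simp only [mem_ofPred_eq, ψ, add_re, mul_re, ofReal_re, ofReal_im, I_re, I_im]
    nlinarith
  have hψd : DifferentiableOn ℂ ψ (ball 0 1) := fun w hw =>
    ((((differentiableAt_const _).sub differentiableAt_id).div
      ((differentiableAt_const _).add differentiableAt_id)
      (one_add_ne_zero_of_norm_lt_one (mem_ball_zero_iff.1 hw))).const_mul _
      |>.add_const _).differentiableWithinAt
  have hψ' : HasDerivAt ψ (-2 * a.re) 0 := by
    have := ((((hasDerivAt_id (0 : ℂ)).const_sub 1).div ((hasDerivAt_id (0 : ℂ)).const_add 1)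
      (by norm_num)).const_mul (a.re : ℂ)).add_const (a.im * I)
    exact this.congr_deriv (by norm_num; ring)
  have hh : HasDerivAt h (deriv h a) (ψ 0) := by
    rw [hψ0]
    exact (hd.differentiableAt (isOpen_lt continuous_re continuous_const |>.mem_nhds ha)).hasDerivAt
  have hk := norm_deriv_le_of_forall_mem_ball_norm_le one_pos (hd.comp hψd hψm)
    fun w hw => (mem_ball_zero_iff.1 (hm (hψm hw))).le
  rw [(hh.scomp 0 hψ').deriv, norm_smul, norm_mul, norm_neg, norm_ofNat, norm_real,
    Real.norm_of_nonpos ha.le, div_one] at hk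
  rwa [← one_div, le_div_iff₀' (by linarith)]

theorem norm_deriv_le_of_mapsTo_halfPlane {k : ℂ → F} {a b : ℂ} (ha : a.re < 0)
    (hd : DifferentiableOn ℂ k {w | (a + w * b).re < 0})
    (hm : MapsTo k {w | (a + w * b).re < 0} (ball 0 1)) :
    ‖deriv k 0‖ ≤ ‖b‖ / (2 * -a.re) := by
  rcases eq_or_ne b 0 with rfl | hb
  · have hall : {w : ℂ | (a + w * 0).re < 0} = univ := by simp [ha]
    rw [hall] at hd hm
    obtain ⟨c, rfl⟩ := (differentiableOn_univ.1 hd).exists_eq_const_of_bounded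
      (isBounded_ball.subset (range_subset_iff.2 fun w => hm (mem_univ w)))
    rw [norm_zero, zero_div, norm_le_zero_iff]
    exact deriv_const (0 : ℂ) c
  · have hmaps : MapsTo (fun u => (u - a) / b) {u | u.re < 0} {w | (a + w * b).re < 0} :=
      fun u hu => by rwa [mem_ofPred_eq, div_mul_cancel₀ _ hb, add_sub_cancel]
    have hk : HasDerivAt k (deriv k 0) ((a - a) / b) := by
      rw [sub_self, zero_div]
      exact (hd.differentiableAt
        ((isOpen_lt (by fun_prop) continuous_const).mem_nhds (by simpa using ha))).hasDerivAt
    have hh := norm_deriv_le_of_mapsTo_leftHalfPlane ha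
      (hd.comp ((differentiableOn_id.sub_const a).div_const b) hmaps) (hm.comp hmaps)
    rw [(hk.scomp a (((hasDerivAt_id a).sub_const a).div_const b)).deriv, norm_smul,
      norm_div, norm_one, one_div, inv_mul_le_iff₀ (norm_pos_iff.2 hb)] at hh
    rwa [div_eq_mul_inv]

end OneVariable

noncomputable def leftHalfPlaneToDisc (a u : ℂ) : ℂ := (u - a) / (u + conj a)

section HalfPlaneToDisc

variable {a : ℂ}

theorem Complex.add_conj_ne_zero_of_re_neg (ha : a.re < 0) {u : ℂ} (hu : u.re < 0) :
    u + conj a ≠ 0 := fun h => by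
  have := congrArg re h
  simp only [add_re, conj_re, zero_re] at this
  linarith

theorem mapsTo_leftHalfPlaneToDisc (ha : a.re < 0) :
    MapsTo (leftHalfPlaneToDisc a) {u | u.re < 0} (ball 0 1) := fun u (hu : u.re < 0) => by
  -- `|u + ā|² - |u - a|² = 4 Re u Re a`
  have hlt : ‖u - a‖ < ‖u + conj a‖ := by
    rw [← sq_lt_sq₀ (norm_nonneg _) (norm_nonneg _), ← normSq_eq_norm_sq, ← normSq_eq_norm_sq]
    simp only [normSq_apply, sub_re, sub_im, add_re, add_im, conj_re, conj_im]
    nlinarith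
  rw [mem_ball_zero_iff, leftHalfPlaneToDisc, norm_div]
  exact (div_lt_one ((norm_nonneg _).trans_lt hlt)).2 hlt

theorem differentiableOn_leftHalfPlaneToDisc (ha : a.re < 0) :
    DifferentiableOn ℂ (leftHalfPlaneToDisc a) {u | u.re < 0} := fun _ hu =>
  ((differentiableAt_id.sub_const a).div (differentiableAt_id.add_const _)
    (add_conj_ne_zero_of_re_neg ha hu)).differentiableWithinAt

theorem hasDerivAt_leftHalfPlaneToDisc (ha : a.re < 0) :
    HasDerivAt (leftHalfPlaneToDisc a) (a + conj a)⁻¹ a := by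
  have hne := add_conj_ne_zero_of_re_neg ha ha
  refine (((hasDerivAt_id a).sub_const a).div ((hasDerivAt_id a).add_const (conj a))
    hne).congr_deriv ?_
  simp only [id, sub_self, zero_mul, sub_zero]
  field_simp

theorem Complex.norm_inv_add_conj_of_re_neg (ha : a.re < 0) :
    ‖(a + conj a)⁻¹‖ = (2 * -a.re)⁻¹ := by
  rw [add_conj, norm_inv, norm_real, Real.norm_of_nonpos (by linarith)]
  ring

end HalfPlaneToDisc

section HalfSpace

variable {E : Type*} [NormedAddCommGroup E] [NormedSpace ℂ E] (L : E →L[ℂ] ℂ) (p : E)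
  {z : E}

theorem isOpen_halfSpace : IsOpen {w | (L (w - p)).re < 0} :=
  isOpen_lt (by fun_prop) continuous_const

theorem ContinuousLinearMap.map_add_smul_sub (t : ℂ) (X : E) :
    L (z + t • X - p) = L (z - p) + t * L X := by
  rw [add_sub_right_comm, map_add, map_smul, smul_eq_mul]

theorem norm_fderiv_apply_le_of_mapsTo_halfSpace {f : E → ℂ} (hz : (L (z - p)).re < 0)
    (hd : DifferentiableOn ℂ f {w | (L (w - p)).re < 0})
    (hm : MapsTo f {w | (L (w - p)).re < 0} (ball 0 1)) (X : E) :
    ‖fderiv ℂ f z X‖ ≤ ‖L X‖ / (2 * -(L (z - p)).re) := by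
  have hline : MapsTo (fun t : ℂ => z + t • X) {t | (L (z - p) + t * L X).re < 0}
      {w | (L (w - p)).re < 0} := fun t ht => by
    rwa [mem_ofPred_eq, L.map_add_smul_sub]
  rw [← (hd.differentiableAt ((isOpen_halfSpace L p).mem_nhds hz)).lineDeriv_eq_fderiv]
  exact norm_deriv_le_of_mapsTo_halfPlane hz
    (hd.comp (by fun_prop) hline) (hm.comp hline)

theorem exists_norm_fderiv_apply_eq_of_halfSpace (hz : (L (z - p)).re < 0) :
    ∃ f : E → ℂ, (DifferentiableOn ℂ f {w | (L (w - p)).re < 0} ∧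
      MapsTo f {w | (L (w - p)).re < 0} (ball 0 1)) ∧
      ∀ X, ‖fderiv ℂ f z X‖ = ‖L X‖ / (2 * -(L (z - p)).re) := by
  have hℓ : MapsTo (fun w => L (w - p)) {w | (L (w - p)).re < 0} {u | u.re < 0} := fun _ hw => hw
  refine ⟨leftHalfPlaneToDisc (L (z - p)) ∘ fun w => L (w - p),
    ⟨(differentiableOn_leftHalfPlaneToDisc hz).comp (by fun_prop) hℓ,
      (mapsTo_leftHalfPlaneToDisc hz).comp hℓ⟩, fun X => ?_⟩
  have hL : HasFDerivAt (fun w => L (w - p)) L z := L.hasFDerivAt.comp z (hasFDerivAt_sub_const p)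
  rw [((hasDerivAt_leftHalfPlaneToDisc hz).comp_hasFDerivAt z hL).fderiv,
    smul_apply, norm_smul, norm_inv_add_conj_of_re_neg hz, div_eq_inv_mul]

theorem carath_halfSpace (hz : (L (z - p)).re < 0) (X : E) :
    carath {w | (L (w - p)).re < 0} z X = ENNReal.ofReal (‖L X‖ / (2 * -(L (z - p)).re)) := by
  obtain ⟨f₀, hf₀, hf₀X⟩ := exists_norm_fderiv_apply_eq_of_halfSpace L p hz
  refine le_antisymm (iSup₂_le fun f hf => ?_) (le_iSup₂_of_le f₀ hf₀ (by rw [hf₀X]))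
  exact ENNReal.ofReal_le_ofReal (norm_fderiv_apply_le_of_mapsTo_halfSpace L p hz hf.1 hf.2 X)

theorem dirDist_halfSpace (hz : (L (z - p)).re < 0) (X : E) :
    dirDist {w | (L (w - p)).re < 0} z X = (ENNReal.ofReal (‖L X‖ / -(L (z - p)).re))⁻¹ := by
  have hτ : 0 < -(L (z - p)).re := neg_pos.2 hz
  rcases eq_or_ne (L X) 0 with hX | hX
  · rw [hX, norm_zero, zero_div, ENNReal.ofReal_zero, ENNReal.inv_zero, dirDist, sSup_eq_top]
    refine fun c hc => ⟨ENNReal.ofReal (c.toReal + 1), ⟨_, by positivity, rfl, fun t _ => ?_⟩, ?_⟩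
    · rwa [mem_ofPred_eq, L.map_add_smul_sub, hX, mul_zero, add_zero]
    · rw [ENNReal.lt_ofReal_iff_toReal_lt hc.ne]
      exact lt_add_one _
  have hbpos : 0 < ‖L X‖ := norm_pos_iff.2 hX
  rw [← ENNReal.ofReal_inv_of_pos (div_pos hbpos hτ), inv_div]
  refine le_antisymm (sSup_le ?_) (le_sSup ⟨_, div_pos hτ hbpos, rfl, fun t ht => ?_⟩)
  · rintro _ ⟨r, hr, rfl, hdisc⟩
    -- `t = -Re a / b` is a boundary point of the slice, at distance `-Re a / |b|` from `0`
    refine ENNReal.ofReal_le_ofReal (not_lt.1 fun hlt => ?_)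
    have := hdisc ((-(L (z - p)).re : ℝ) / L X) (by
      rwa [norm_div, norm_real, Real.norm_of_nonneg hτ.le])
    rw [mem_ofPred_eq, L.map_add_smul_sub, div_mul_cancel₀ _ hX, add_re, ofReal_re] at this
    linarith
  · rw [mem_ofPred_eq, L.map_add_smul_sub, add_re]
    calc (L (z - p)).re + (t * L X).re ≤ (L (z - p)).re + ‖t‖ * ‖L X‖ := by
          rw [← norm_mul]; gcongr; exact re_le_norm _
      _ < (L (z - p)).re + -(L (z - p)).re / ‖L X‖ * ‖L X‖ := by gcongr
      _ = 0 := by rw [div_mul_cancel₀ _ hbpos.ne', add_neg_cancel]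

end HalfSpace

theorem caratheodory_halfspace_general {n : ℕ} (p ν : EuclideanSpace ℂ (Fin n))
    (z X : EuclideanSpace ℂ (Fin n))
    (hz : z ∈ {w : EuclideanSpace ℂ (Fin n) | (inner ℂ (w - p) ν : ℂ).re < 0}) :
    carath {w : EuclideanSpace ℂ (Fin n) | (inner ℂ (w - p) ν : ℂ).re < 0} z X
      = (2 * dirDist {w : EuclideanSpace ℂ (Fin n) | (inner ℂ (w - p) ν : ℂ).re < 0} z X)⁻¹ := by
  have hhalf : {w : EuclideanSpace ℂ (Fin n) | (inner ℂ (w - p) ν : ℂ).re < 0}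
      = {w | (innerSL ℂ ν (w - p)).re < 0} := by
    ext w
    rw [mem_ofPred_eq, mem_ofPred_eq, innerSL_apply_apply, ← inner_conj_symm, conj_re]
  rw [hhalf] at hz ⊢
  rw [carath_halfSpace _ _ hz, dirDist_halfSpace _ _ hz,
    ENNReal.mul_inv (.inl two_ne_zero) (.inl ENNReal.ofNat_ne_top), inv_inv, mul_comm 2,
    ← div_div, ENNReal.ofReal_div_of_pos two_pos, ENNReal.ofReal_ofNat, ENNReal.div_eq_inv_mul]

theorem caratheodory_halfspace {n : ℕ} (p ν : EuclideanSpace ℂ (Fin n)) (hν : ν ≠ 0)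
    (z X : EuclideanSpace ℂ (Fin n))
    (hz : z ∈ {w : EuclideanSpace ℂ (Fin n) | (inner ℂ (w - p) ν : ℂ).re < 0}) :
    carath {w : EuclideanSpace ℂ (Fin n) | (inner ℂ (w - p) ν : ℂ).re < 0} z X
      = (2 * dirDist {w : EuclideanSpace ℂ (Fin n) | (inner ℂ (w - p) ν : ℂ).re < 0} z X)⁻¹ :=
  caratheodory_halfspace_general p ν z X hz
end

section
/- If D ⊆ ℂⁿ is a convex domain, then for every z ∈ D and X ∈ ℂⁿ the Carathéodory metric satisfies γ_D(z;X) ≥ 1/(2 d_D(z;X)) (Frankel–Graham estimate). -/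
open Set Metric
open scoped ENNReal

/-! Let `p = z + λX` lie outside `D`. Hahn–Banach separates `p` from the open convex set `D` by
a complex linear functional `L`, so `D` lies in the half-space `Re L(w - z) < a := Re L(p - z)`.
The Möbius map `s ↦ s / (s - 2a)` sends that half-plane into the unit disc and has derivative
`-1/(2a)` at `0`; composed with `w ↦ L(w - z)` it is a competitor for `γ_D(z; X)` with
`|f'(z)X| = |LX| / (2a) ≥ 1 / (2|λ|)`. Letting `|λ|` decrease to `d_D(z; X)` gives the estimate. -/

section

variable {E : Type*} [NormedAddCommGroup E] [NormedSpace ℂ E]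

theorem norm_lt_norm_sub_two_mul {a : ℝ} (ha : 0 < a) {s : ℂ} (hs : s.re < a) :
    ‖s‖ < ‖s - 2 * a‖ := by
  have key : ‖s‖ ^ 2 < ‖s - 2 * a‖ ^ 2 := by
    simp only [Complex.sq_norm, Complex.normSq_apply, Complex.sub_re, Complex.sub_im,
      Complex.mul_re, Complex.mul_im, Complex.ofReal_re, Complex.ofReal_im, Complex.re_ofNat,
      Complex.im_ofNat]
    nlinarith
  exact lt_of_pow_lt_pow_left₀ 2 (norm_nonneg _) key

theorem norm_div_sub_two_mul_lt_one {a : ℝ} (ha : 0 < a) {s : ℂ} (hs : s.re < a) :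
    ‖s / (s - 2 * a)‖ < 1 := by
  have hlt := norm_lt_norm_sub_two_mul ha hs
  rw [norm_div, div_lt_one ((norm_nonneg s).trans_lt hlt)]
  exact hlt

theorem hasDerivAt_div_sub_const_zero {c : ℂ} (hc : c ≠ 0) :
    HasDerivAt (fun s => s / (s - c)) (-c⁻¹) 0 := by
  refine ((hasDerivAt_id' 0).div ((hasDerivAt_id' 0).sub_const c) ?_).congr_deriv ?_
  · simpa using hc
  · field_simp
    ring

theorem ofReal_norm_div_le_carath {D : Set E} {z X : E} (L : E →L[ℂ] ℂ) {a : ℝ} (ha : 0 < a)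
    (hL : ∀ w ∈ D, (L (w - z)).re < a) :
    ENNReal.ofReal (‖L X‖ / (2 * a)) ≤ carath D z X := by
  set f : E → ℂ := fun w => L (w - z) / (L (w - z) - 2 * a)
  have hL_deriv : HasFDerivAt (fun w => L (w - z)) L z :=
    L.comp_id ▸ L.hasFDerivAt.comp z (hasFDerivAt_sub_const z)
  have h2a : (2 * a : ℂ) ≠ 0 := by exact_mod_cast (mul_pos two_pos ha).ne'
  have hf_deriv : HasFDerivAt f ((-(2 * a : ℂ)⁻¹) • L) z :=
    (hasDerivAt_div_sub_const_zero h2a).comp_hasFDerivAt_of_eq z hL_deriv (by simp)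
  have hden : ∀ w ∈ D, L (w - z) - 2 * a ≠ 0 := fun w hw =>
    norm_pos_iff.mp ((norm_nonneg _).trans_lt (norm_lt_norm_sub_two_mul ha (hL w hw)))
  have hf_diff : DifferentiableOn ℂ f D := fun w hw => by
    fun_prop (disch := exact hden w hw)
  have hf_maps : MapsTo f D (ball 0 1) := fun w hw =>
    mem_ball_zero_iff.mpr (norm_div_sub_two_mul_lt_one ha (hL w hw))
  have hf_norm : ‖fderiv ℂ f z X‖ = ‖L X‖ / (2 * a) := by
    rw [hf_deriv.fderiv]
    simp only [smul_apply, smul_eq_mul, norm_mul, norm_neg, norm_inv, Complex.norm_real,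
      Complex.norm_ofNat, Real.norm_eq_abs, abs_of_pos ha]
    ring
  exact hf_norm ▸ le_iSup₂_of_le f ⟨hf_diff, hf_maps⟩ le_rfl

theorem inv_two_mul_norm_le_carath {D : Set E} (hD : IsOpen D) (hconv : Convex ℝ D) {z X : E}
    (hz : z ∈ D) {lam : ℂ} (hout : z + lam • X ∉ D) :
    (2 * ENNReal.ofReal ‖lam‖)⁻¹ ≤ carath D z X := by
  obtain ⟨L, hL⟩ := RCLike.geometric_hahn_banach_open_point (𝕜 := ℂ) hconv hD hout
  simp only [RCLike.re_to_complex] at hL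
  set a := (lam * L X).re
  have hL_out : (L (z + lam • X)).re = (L z).re + a := by simp [a]
  have ha : 0 < a := by linarith [hL z hz]
  have hLD : ∀ w ∈ D, (L (w - z)).re < a := fun w hw => by
    rw [map_sub, Complex.sub_re]
    linarith [hL w hw]
  have ha_le : a ≤ ‖lam‖ * ‖L X‖ := (Complex.re_le_norm _).trans (norm_mul _ _).le
  have hlam : 0 < ‖lam‖ := pos_of_mul_pos_left (ha.trans_le ha_le) (norm_nonneg _)
  calc (2 * ENNReal.ofReal ‖lam‖)⁻¹ = ENNReal.ofReal (1 / (2 * ‖lam‖)) := by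
        rw [one_div, ENNReal.ofReal_inv_of_pos (by positivity), ENNReal.ofReal_mul zero_le_two,
          ENNReal.ofReal_ofNat]
    _ ≤ ENNReal.ofReal (‖L X‖ / (2 * a)) := by
        refine ENNReal.ofReal_le_ofReal ?_
        rw [div_le_div_iff₀ (by positivity) (by positivity)]
        linarith
    _ ≤ carath D z X := ofReal_norm_div_le_carath L ha hLD

theorem le_dirDist_of_forall_mem {D : Set E} {z X : E} {ρ : ℝ≥0∞}
    (h : ∀ lam : ℂ, ENNReal.ofReal ‖lam‖ < ρ → z + lam • X ∈ D) : ρ ≤ dirDist D z X := by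
  refine le_of_forall_lt fun t ht => ?_
  obtain ⟨r, -, htr, hrρ⟩ := ENNReal.lt_iff_exists_real_btwn.mp ht
  have hr : 0 < r := ENNReal.ofReal_pos.mp (pos_of_gt htr)
  refine htr.trans_le (le_sSup ⟨r, hr, rfl, fun lam hlam => h lam ?_⟩)
  exact ((ENNReal.ofReal_lt_ofReal_iff hr).mpr hlam).trans hrρ

end

theorem frankel_graham_general {n : ℕ} (D : Set (EuclideanSpace ℂ (Fin n)))
    (hD : IsOpen D) (hconv : Convex ℝ D)
    (z X : EuclideanSpace ℂ (Fin n)) (hz : z ∈ D) :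
    (2 * dirDist D z X)⁻¹ ≤ carath D z X := by
  have h2 : (2 : ℝ≥0∞) ≠ 0 := two_ne_zero
  rw [ENNReal.inv_le_iff_inv_le, ← ENNReal.inv_mul_le_iff h2 ENNReal.ofNat_ne_top]
  refine le_dirDist_of_forall_mem fun lam hlam => ?_
  by_contra hout
  have hbound := inv_two_mul_norm_le_carath hD hconv hz hout
  rw [ENNReal.inv_le_iff_inv_le, ← ENNReal.inv_mul_le_iff h2 ENNReal.ofNat_ne_top] at hbound
  exact hlam.not_ge hbound

theorem frankel_graham {n : ℕ} (D : Set (EuclideanSpace ℂ (Fin n)))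
    (hD : IsOpen D) (hconv : Convex ℝ D) (hne : D.Nonempty)
    (z X : EuclideanSpace ℂ (Fin n)) (hz : z ∈ D) :
    (2 * dirDist D z X)⁻¹ ≤ carath D z X :=
  frankel_graham_general D hD hconv z X hz
end

section
/- If D ⊆ ℂⁿ is a convex domain, then for every z ∈ D and X ∈ ℂⁿ the Kobayashi metric satisfies 1/(2 d_D(z;X)) ≤ κ_D(z;X) ≤ 1/d_D(z;X), with the convention 1/∞ = 0. -/
/-!
The upper bound comes from the linear disc `ζ ↦ z + (r ζ) • X`. For the lower bound, let `φ` be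
a holomorphic disc in `D` with `φ 0 = z` and `α • φ' 0 = X`. If `z + μ • φ' 0 ∉ D`, Hahn–Banach
gives a complex functional `L` with `re L < re L (z + μ • φ' 0)` on `D`, so `L ∘ φ` maps the disc
into a half-plane at distance `t = re (μ * L (φ' 0))` from `L z`. The Schwarz lemma for a
half-plane gives `‖L (φ' 0)‖ ≤ 2 t`, which is impossible when `‖μ‖ < 1 / 2`. Hence every
`z + λ • X` with `‖λ‖ < 1 / (2 ‖α‖)` lies in `D`.
-/

open Set Metric
open scoped ENNReal

namespace Complex

lemma norm_le_norm_two_mul_sub_of_re_le {w : ℂ} {M : ℝ} (hM : 0 ≤ M) (hw : w.re ≤ M) :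
    ‖w‖ ≤ ‖2 * M - w‖ := by
  rw [← sq_le_sq₀ (norm_nonneg _) (norm_nonneg _), Complex.sq_norm, Complex.sq_norm]
  simp only [normSq_apply, sub_re, sub_im, mul_re, mul_im, ofReal_re, ofReal_im]
  norm_num
  nlinarith

-- The map `w ↦ w / (2 * M - w)` sends `{re < M}` into the unit disc, fixing `0` with derivative
-- `1 / (2 * M)` there.
theorem norm_deriv_le_of_re_lt_of_apply_eq_zero {f : ℂ → ℂ} {c : ℂ} {R M : ℝ} (hR : 0 < R)
    (hf : DifferentiableOn ℂ f (ball c R)) (hre : ∀ ζ ∈ ball c R, (f ζ).re < M)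
    (hc : f c = 0) : ‖deriv f c‖ ≤ 2 * M / R := by
  have hcR : c ∈ ball c R := mem_ball_self hR
  have hM : 0 < M := by simpa [hc] using hre c hcR
  have hden : ∀ ζ ∈ ball c R, 2 * (M : ℂ) - f ζ ≠ 0 := fun ζ hζ h => by
    have := congrArg re h
    simp only [sub_re, mul_re, ofReal_re, ofReal_im, zero_re] at this
    norm_num at this
    linarith [hre ζ hζ]
  set g : ℂ → ℂ := fun ζ => f ζ / (2 * M - f ζ)
  have hgd : DifferentiableOn ℂ g (ball c R) := hf.div (hf.const_sub _) hden
  have hgm : MapsTo g (ball c R) (closedBall (g c) 1) := fun ζ hζ => by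
    simp only [g, hc, zero_div, mem_closedBall, dist_zero_right, norm_div]
    exact div_le_one_of_le₀ (norm_le_norm_two_mul_sub_of_re_le hM.le (hre ζ hζ).le)
      (norm_nonneg _)
  have hfc : HasDerivAt f (deriv f c) c :=
    (hf.differentiableAt (isOpen_ball.mem_nhds hcR)).hasDerivAt
  have hgc : deriv g c = deriv f c / (2 * M) := by
    have : HasDerivAt g _ c := hfc.div (hfc.const_sub (2 * (M : ℂ))) (hden c hcR)
    rw [this.deriv, hc]
    have : (M : ℂ) ≠ 0 := ofReal_ne_zero.2 hM.ne'
    field_simp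
    ring
  have hschwarz := norm_deriv_le_div_of_mapsTo_ball hgd hgm hR
  rw [hgc, norm_div, norm_mul, Complex.norm_two, norm_real, Real.norm_of_nonneg hM.le,
    div_le_div_iff₀ (by positivity) hR] at hschwarz
  rw [le_div_iff₀ hR]
  linarith

theorem norm_deriv_le_of_re_lt {f : ℂ → ℂ} {c : ℂ} {R u : ℝ} (hR : 0 < R)
    (hf : DifferentiableOn ℂ f (ball c R)) (hre : ∀ ζ ∈ ball c R, (f ζ).re < u) :
    ‖deriv f c‖ ≤ 2 * (u - (f c).re) / R := by
  have := norm_deriv_le_of_re_lt_of_apply_eq_zero hR (hf.sub_const (f c))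
    (M := u - (f c).re) (fun ζ hζ => by simpa using hre ζ hζ) (sub_self _)
  rwa [deriv_sub_const] at this

end Complex

theorem Convex.add_smul_deriv_mem {E : Type*} [NormedAddCommGroup E] [NormedSpace ℂ E]
    {D : Set E} (hconv : Convex ℝ D) (hD : IsOpen D) {φ : ℂ → E} {c : ℂ} {R : ℝ}
    (hφd : DifferentiableOn ℂ φ (ball c R)) (hφm : MapsTo φ (ball c R) D) {μ : ℂ}
    (hμ : ‖μ‖ < R / 2) : φ c + μ • deriv φ c ∈ D := by
  by_contra hout
  have hR : 0 < R := by linarith [norm_nonneg μ]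
  have hcR : c ∈ ball c R := mem_ball_self hR
  obtain ⟨L, hL⟩ := RCLike.geometric_hahn_banach_open_point (𝕜 := ℂ) hconv hD hout
  have hLφ : HasDerivAt (L ∘ φ) (L (deriv φ c)) c :=
    L.hasFDerivAt.comp_hasDerivAt c
      (hφd.differentiableAt (isOpen_ball.mem_nhds hcR)).hasDerivAt
  have hbound := Complex.norm_deriv_le_of_re_lt hR (L.differentiable.comp_differentiableOn hφd)
    (fun ζ hζ => hL _ (hφm hζ))
  rw [hLφ.deriv, Function.comp_apply] at hbound
  set t := (L (φ c + μ • deriv φ c)).re - (L (φ c)).re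
  have ht : 0 < t := sub_pos.2 (hL _ (hφm hcR))
  have ht_eq : t = (μ * L (deriv φ c)).re := by simp [t]
  refine lt_irrefl t ?_
  calc
    t ≤ ‖μ‖ * ‖L (deriv φ c)‖ := ht_eq ▸ (Complex.re_le_norm _).trans_eq (norm_mul _ _)
    _ ≤ ‖μ‖ * (2 * t / R) := by gcongr; exact hbound
    _ < R / 2 * (2 * t / R) := by gcongr
    _ = t := by field_simp

section

variable {E : Type*} [NormedAddCommGroup E] [NormedSpace ℂ E] {D : Set E} {z X : E}

theorem ofReal_le_dirDist {r : ℝ} (hr : 0 < r) (hD : ∀ lam : ℂ, ‖lam‖ < r → z + lam • X ∈ D) :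
    ENNReal.ofReal r ≤ dirDist D z X :=
  le_sSup ⟨r, hr, rfl, hD⟩

theorem dirDist_zero (hz : z ∈ D) : dirDist D z 0 = ⊤ :=
  ENNReal.eq_top_of_forall_nnreal_le fun s => calc
    (s : ℝ≥0∞) ≤ ENNReal.ofReal (s + 1) := by
      rw [← ENNReal.ofReal_coe_nnreal]; exact ENNReal.ofReal_le_ofReal (by linarith)
    _ ≤ dirDist D z 0 := ofReal_le_dirDist (by positivity) fun _ _ => by simpa using hz

theorem kob_le_ofReal_inv {r : ℝ} (hr : 0 < r) (hD : ∀ lam : ℂ, ‖lam‖ < r → z + lam • X ∈ D) :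
    kob D z X ≤ ENNReal.ofReal r⁻¹ := by
  have hφ : HasDerivAt (fun ζ : ℂ => z + (r * ζ) • X) ((r : ℂ) • X) 0 := by
    simpa using (((hasDerivAt_id (0 : ℂ)).const_mul (r : ℂ)).smul_const X).const_add z
  refine sInf_le ⟨(r : ℂ)⁻¹, by simp [abs_of_pos hr], fun ζ => z + (r * ζ) • X,
    by fun_prop, fun ζ hζ => hD _ ?_, by simp, ?_⟩
  · rw [norm_mul, Complex.norm_real, Real.norm_of_nonneg hr.le]
    exact mul_lt_of_lt_one_right hr (mem_ball_zero_iff.1 hζ)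
  · rw [fderiv_apply_one_eq_deriv, hφ.deriv, smul_smul,
      inv_mul_cancel₀ (Complex.ofReal_ne_zero.2 hr.ne'), one_smul]

theorem kob_le_inv_dirDist : kob D z X ≤ (dirDist D z X)⁻¹ := by
  rw [ENNReal.le_inv_iff_le_inv]
  refine sSup_le ?_
  rintro _ ⟨r, hr, rfl, hD⟩
  rw [ENNReal.le_inv_iff_le_inv, ← ENNReal.ofReal_inv_of_pos hr]
  exact kob_le_ofReal_inv hr hD

theorem inv_two_mul_dirDist_le_ofReal_norm (hconv : Convex ℝ D) (hD : IsOpen D) {α : ℂ}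
    {φ : ℂ → E} (hφd : DifferentiableOn ℂ φ (ball 0 1)) (hφm : MapsTo φ (ball 0 1) D)
    (hφ0 : φ 0 = z) (hα : α • fderiv ℂ φ 0 1 = X) :
    (2 * dirDist D z X)⁻¹ ≤ ENNReal.ofReal ‖α‖ := by
  rw [fderiv_apply_one_eq_deriv] at hα
  rcases eq_or_ne α 0 with rfl | hα0
  · rw [← hα, zero_smul, dirDist_zero (hφ0 ▸ hφm (mem_ball_self one_pos))]
    simp
  · have hαpos : 0 < ‖α‖ := norm_pos_iff.2 hα0
    have hd : ENNReal.ofReal (2 * ‖α‖)⁻¹ ≤ dirDist D z X := by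
      refine ofReal_le_dirDist (by positivity) fun lam hlam => ?_
      have hμ : ‖lam * α‖ < 1 / 2 := by
        calc ‖lam * α‖ = ‖lam‖ * ‖α‖ := norm_mul _ _
          _ < (2 * ‖α‖)⁻¹ * ‖α‖ := by gcongr
          _ = 1 / 2 := by field_simp
      simpa [← hα, hφ0, smul_smul] using hconv.add_smul_deriv_mem hD hφd hφm hμ
    rw [ENNReal.inv_le_iff_inv_le, ← ENNReal.ofReal_inv_of_pos hαpos]
    calc ENNReal.ofReal ‖α‖⁻¹ = 2 * ENNReal.ofReal (2 * ‖α‖)⁻¹ := by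
          rw [← ENNReal.ofReal_ofNat 2, ← ENNReal.ofReal_mul (by norm_num)]
          congr 1; field_simp
      _ ≤ 2 * dirDist D z X := by gcongr

theorem inv_two_mul_dirDist_le_kob (hconv : Convex ℝ D) (hD : IsOpen D) :
    (2 * dirDist D z X)⁻¹ ≤ kob D z X :=
  le_sInf fun _ ⟨_, hc, _, hφd, hφm, hφ0, hα⟩ =>
    hc ▸ inv_two_mul_dirDist_le_ofReal_norm hconv hD hφd hφm hφ0 hα

end

theorem kobayashi_convex_bounds_general {n : ℕ} (D : Set (EuclideanSpace ℂ (Fin n)))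
    (hD : IsOpen D) (hconv : Convex ℝ D)
    (z X : EuclideanSpace ℂ (Fin n)) :
    (2 * dirDist D z X)⁻¹ ≤ kob D z X ∧ kob D z X ≤ (dirDist D z X)⁻¹ :=
  ⟨inv_two_mul_dirDist_le_kob hconv hD, kob_le_inv_dirDist⟩

theorem kobayashi_convex_bounds {n : ℕ} (D : Set (EuclideanSpace ℂ (Fin n)))
    (hD : IsOpen D) (hconv : Convex ℝ D) (hne : D.Nonempty)
    (z X : EuclideanSpace ℂ (Fin n)) (hz : z ∈ D) :
    (2 * dirDist D z X)⁻¹ ≤ kob D z X ∧ kob D z X ≤ (dirDist D z X)⁻¹ :=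
  kobayashi_convex_bounds_general D hD hconv z X
end
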